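/- Let A be a q-positive subset of an SSD space B. Then A ⊆ P_q(Φ_A^@) ⊆ G_{Φ_A} ⊆ A^π ∩ cl_w(conv A), where conv A is the convex hull of A and cl_w denotes closure in the w(B,B) topology. -/

import Mathlib

noncomputable section

variable {B : Type*} [AddCommGroup B] [Module ℝ B]

/-- The quadratic form `q(x) = ½⌊x,x⌋` associated to the bilinear form `br`. -/
def qQ (br : B →ₗ[ℝ] B →ₗ[ℝ] ℝ) (x : B) : ℝ := (1 / 2) * br x x

/-- `A` is `q`-positive: nonempty and `q(b - c) ≥ 0` for all `b, c ∈ A`. -/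
def IsQPositive (br : B →ₗ[ℝ] B →ₗ[ℝ] ℝ) (A : Set B) : Prop :=
  A.Nonempty ∧ ∀ b ∈ A, ∀ c ∈ A, 0 ≤ qQ br (b - c)

/-- `A^π`, the set of points `q`-positively related to `A`. -/
def qPi (br : B →ₗ[ℝ] B →ₗ[ℝ] ℝ) (A : Set B) : Set B :=
  {b : B | ∀ a ∈ A, 0 ≤ qQ br (b - a)}

/-- `A` is maximally `q`-positive. -/
def IsMaxQPositive (br : B →ₗ[ℝ] B →ₗ[ℝ] ℝ) (A : Set B) : Prop :=
  IsQPositive br A ∧ ∀ C : Set B, IsQPositive br C → A ⊆ C → C = A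

/-- The generalized Fitzpatrick function `Φ_A(x) = sup_{a ∈ A} (⌊x,a⌋ - q(a))`. -/
def PhiF (br : B →ₗ[ℝ] B →ₗ[ℝ] ℝ) (A : Set B) (x : B) : EReal :=
  ⨆ a ∈ A, ((br x a - qQ br a : ℝ) : EReal)

/-- The intrinsic conjugate `f^@(b) = sup_{c ∈ B} (⌊c,b⌋ - f(c))`. -/
def intrinsicConj (br : B →ₗ[ℝ] B →ₗ[ℝ] ℝ) (f : B → EReal) (b : B) : EReal :=
  ⨆ c : B, ((br c b : ℝ) : EReal) - f c

/-- `P_q(f) = {b : f(b) = q(b)}`. -/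
def PqSet (br : B →ₗ[ℝ] B →ₗ[ℝ] ℝ) (f : B → EReal) : Set B :=
  {b : B | f b = ((qQ br b : ℝ) : EReal)}

/-- `G_f = {b : f(b) + f^@(b) = ⌊b,b⌋}`. -/
def GSet (br : B →ₗ[ℝ] B →ₗ[ℝ] ℝ) (f : B → EReal) : Set B :=
  {b : B | f b + intrinsicConj br f b = ((br b b : ℝ) : EReal)}

/-- Convexity for `ℝ ∪ {+∞}`-valued functions. -/
def ConvexE (f : B → EReal) : Prop :=
  ∀ x y : B, ∀ α β : ℝ, 0 ≤ α → 0 ≤ β → α + β = 1 →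
    f (α • x + β • y) ≤ (α : EReal) * f x + (β : EReal) * f y

/-- The weak topology `w(B,B)` induced by the functionals `⌊·,b⌋`, `b ∈ B`. -/
def weakTop (br : B →ₗ[ℝ] B →ₗ[ℝ] ℝ) : TopologicalSpace B :=
  ⨅ b : B, TopologicalSpace.induced (fun x => br x b) inferInstance

/-- Lower semicontinuity with respect to the weak topology `w(B,B)`. -/
def LscW (br : B →ₗ[ℝ] B →ₗ[ℝ] ℝ) (f : B → EReal) : Prop :=
  @LowerSemicontinuous B EReal (weakTop br) _ f

/-- `A` is `q`-representable: it has a `w(B,B)`-lsc proper convex `q`-representation. -/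
def IsQRepresentable (br : B →ₗ[ℝ] B →ₗ[ℝ] ℝ) (A : Set B) : Prop :=
  ∃ f : B → EReal, LscW br f ∧ ConvexE f ∧ (∃ x, f x ≠ ⊤) ∧
    (∀ x, ((qQ br x : ℝ) : EReal) ≤ f x) ∧ PqSet br f = A

/-!
On a `q`-positive set `A`, `Φ_A` agrees with `q`, and consequently `Φ_A ≤ Φ_A^@` everywhere.
For `b ∈ G_{Φ_A}` this forces `Φ_A(b) ≤ q(b)`, which unwinds to `b ∈ A^π`. If such a `b` were not
in the `w(B,B)`-closure of `conv A`, Hahn–Banach would separate them by a weakly continuous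
functional, necessarily of the form `⌊·,d⌋`: `⌊b,d⌋ < u < ⌊a,d⌋` for `a ∈ A`. Then
`Φ_A(b - d) ≤ Φ_A(b) - u`, so the term `c = b - d` of the supremum defining `Φ_A^@(b)` exceeds
`⌊b,b⌋ - Φ_A(b)`, contradicting `b ∈ G_{Φ_A}`.
-/

theorem weakTop_eq_weakBilin (br : B →ₗ[ℝ] B →ₗ[ℝ] ℝ) :
    weakTop br = (inferInstance : TopologicalSpace (WeakBilin br)) :=
  (induced_to_pi fun x y => br x y).symm

theorem exists_lt_lt_of_notMem_closure_weakTop (br : B →ₗ[ℝ] B →ₗ[ℝ] ℝ) {s : Set B}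
    (hs : Convex ℝ s) {b : B} (hb : b ∉ @closure B (weakTop br) s) :
    ∃ d : B, ∃ u : ℝ, br b d < u ∧ ∀ a ∈ s, u < br a d := by
  rw [weakTop_eq_weakBilin] at hb
  let s' : Set (WeakBilin br) := s
  obtain ⟨f, u, hfb, hfs⟩ :=
    geometric_hahn_banach_point_closed (Convex.closure (s := s') hs) isClosed_closure hb
  obtain ⟨d, rfl⟩ := LinearMap.dualEmbedding_surjective br f
  exact ⟨d, u, hfb, fun a ha => hfs a (subset_closure ha)⟩

theorem EReal.coe_sub_le_of_coe_sub_le {x z : ℝ} {y : EReal} (h : ((x - z : ℝ) : EReal) ≤ y) :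
    (x : EReal) - y ≤ z :=
  calc (x : EReal) - y ≤ x - ((x - z : ℝ) : EReal) := EReal.sub_le_sub le_rfl h
    _ = z := by rw [← EReal.coe_sub, sub_sub_cancel]

section SSD

variable {br : B →ₗ[ℝ] B →ₗ[ℝ] ℝ} {A : Set B}

theorem apply_self_eq_two_mul_qQ (b : B) : br b b = 2 * qQ br b := by
  simp only [qQ]; ring

theorem qQ_sub (hsym : ∀ x y : B, br x y = br y x) (b c : B) :
    qQ br (b - c) = qQ br b + qQ br c - br b c := by
  simp only [qQ, map_sub, LinearMap.sub_apply, hsym c b]; ring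

theorem le_phiF {a : B} (ha : a ∈ A) (x : B) :
    ((br x a - qQ br a : ℝ) : EReal) ≤ PhiF br A x :=
  le_iSup₂ (f := fun a (_ : a ∈ A) => ((br x a - qQ br a : ℝ) : EReal)) a ha

theorem phiF_le_coe {x : B} {t : ℝ} (h : ∀ a ∈ A, br x a - qQ br a ≤ t) : PhiF br A x ≤ t :=
  iSup₂_le fun a ha => EReal.coe_le_coe_iff.mpr (h a ha)

theorem exists_phiF_eq_coe (hA : A.Nonempty) {x : B} (htop : PhiF br A x ≠ ⊤) :
    ∃ r : ℝ, PhiF br A x = r := by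
  obtain ⟨a, ha⟩ := hA
  have hbot : PhiF br A x ≠ ⊥ := ne_bot_of_le_ne_bot (EReal.coe_ne_bot _) (le_phiF ha x)
  exact ⟨_, (EReal.coe_toReal htop hbot).symm⟩

theorem mem_qPi_of_phiF_le (hsym : ∀ x y : B, br x y = br y x) {b : B}
    (h : PhiF br A b ≤ qQ br b) : b ∈ qPi br A := by
  intro a ha
  have hab : br b a - qQ br a ≤ qQ br b := EReal.coe_le_coe_iff.mp ((le_phiF ha b).trans h)
  rw [qQ_sub hsym]
  linarith

theorem phiF_eq_qQ_of_mem (hsym : ∀ x y : B, br x y = br y x) (hA : IsQPositive br A) {a : B}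
    (ha : a ∈ A) : PhiF br A a = qQ br a := by
  refine le_antisymm (phiF_le_coe fun c hc => ?_) ?_
  · have hac := hA.2 a ha c hc
    rw [qQ_sub hsym] at hac
    linarith
  · simpa [apply_self_eq_two_mul_qQ, two_mul] using le_phiF (br := br) ha a

theorem le_intrinsicConj (f : B → EReal) (c b : B) :
    ((br c b : ℝ) : EReal) - f c ≤ intrinsicConj br f b :=
  le_iSup (fun c => ((br c b : ℝ) : EReal) - f c) c

theorem coe_sub_le_intrinsicConj {f : B → EReal} {c : B} {t : ℝ} (h : f c ≤ t) (b : B) :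
    ((br c b - t : ℝ) : EReal) ≤ intrinsicConj br f b :=
  (EReal.sub_le_sub le_rfl h).trans (le_intrinsicConj f c b)

theorem intrinsicConj_phiF_eq_qQ_of_mem (hsym : ∀ x y : B, br x y = br y x)
    (hA : IsQPositive br A) {a : B} (ha : a ∈ A) :
    intrinsicConj br (PhiF br A) a = qQ br a := by
  refine le_antisymm (iSup_le fun c => EReal.coe_sub_le_of_coe_sub_le (le_phiF ha c)) ?_
  have h := coe_sub_le_intrinsicConj (br := br) (phiF_eq_qQ_of_mem hsym hA ha).le a
  rwa [apply_self_eq_two_mul_qQ, two_mul, add_sub_cancel_right] at h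

theorem phiF_le_intrinsicConj (hsym : ∀ x y : B, br x y = br y x) (hA : IsQPositive br A)
    (x : B) : PhiF br A x ≤ intrinsicConj br (PhiF br A) x :=
  iSup₂_le fun a ha => by
    simpa only [hsym x a] using coe_sub_le_intrinsicConj (phiF_eq_qQ_of_mem hsym hA ha).le x

theorem mem_GSet_of_mem_PqSet_intrinsicConj (hsym : ∀ x y : B, br x y = br y x)
    (hA : IsQPositive br A) {b : B} (hb : b ∈ PqSet br (intrinsicConj br (PhiF br A))) :
    b ∈ GSet br (PhiF br A) := by
  have hconj : intrinsicConj br (PhiF br A) b = qQ br b := hb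
  have hle : PhiF br A b ≤ qQ br b := (phiF_le_intrinsicConj hsym hA b).trans hconj.le
  obtain ⟨r, hr⟩ := exists_phiF_eq_coe hA.1 (ne_top_of_le_ne_top (EReal.coe_ne_top _) hle)
  have hrq : r ≤ qQ br b := by exact_mod_cast hr ▸ hle
  have hqr : br b b - r ≤ qQ br b := by exact_mod_cast hconj ▸ coe_sub_le_intrinsicConj hr.le b
  show PhiF br A b + intrinsicConj br (PhiF br A) b = br b b
  rw [apply_self_eq_two_mul_qQ] at hqr ⊢
  rw [hr, hconj]
  norm_cast
  linarith

theorem exists_coe_of_mem_GSet (hsym : ∀ x y : B, br x y = br y x) (hA : IsQPositive br A)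
    {b : B} (hb : b ∈ GSet br (PhiF br A)) :
    ∃ r : ℝ, PhiF br A b = r ∧ intrinsicConj br (PhiF br A) b = (br b b - r : ℝ) ∧
      r ≤ qQ br b := by
  have hsum : PhiF br A b + intrinsicConj br (PhiF br A) b = br b b := hb
  have hle := phiF_le_intrinsicConj hsym hA b
  have htop : PhiF br A b ≠ ⊤ := fun h => by
    rw [h, top_le_iff] at hle
    simp [h, hle] at hsum
  obtain ⟨r, hr⟩ := exists_phiF_eq_coe hA.1 htop
  rw [hr] at hsum hle
  induction h : intrinsicConj br (PhiF br A) b using EReal.rec with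
  | bot => simp [h] at hsum
  | top => simp [h] at hsum
  | coe s =>
    rw [h] at hsum hle
    have hs : r + s = br b b := by exact_mod_cast hsum
    have hrs : r ≤ s := by exact_mod_cast hle
    refine ⟨r, hr, by rw [← hs, add_sub_cancel_left], ?_⟩
    rw [apply_self_eq_two_mul_qQ] at hs
    linarith

theorem mem_closure_convexHull_of_mem_GSet (hsym : ∀ x y : B, br x y = br y x)
    (hA : IsQPositive br A) {b : B} (hb : b ∈ GSet br (PhiF br A)) :
    b ∈ @closure B (weakTop br) (convexHull ℝ A) := by
  obtain ⟨r, hr, hconj, -⟩ := exists_coe_of_mem_GSet hsym hA hb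
  by_contra hcl
  obtain ⟨d, u, hbd, hAd⟩ := exists_lt_lt_of_notMem_closure_weakTop br (convex_convexHull ℝ A) hcl
  have hshift : PhiF br A (b - d) ≤ ((r - u : ℝ) : EReal) := phiF_le_coe fun a ha => by
    have hba : br b a - qQ br a ≤ r := by exact_mod_cast hr ▸ le_phiF ha b
    have hda := hAd a (subset_convexHull ℝ A ha)
    simp only [map_sub, LinearMap.sub_apply, hsym d a]
    linarith
  have hconj_ge : br (b - d) b - (r - u) ≤ br b b - r := by
    exact_mod_cast hconj ▸ coe_sub_le_intrinsicConj hshift b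
  simp only [map_sub, LinearMap.sub_apply, hsym d b] at hconj_ge
  linarith

end SSD

theorem stmt7_general (br : B →ₗ[ℝ] B →ₗ[ℝ] ℝ)
    (hsym : ∀ x y : B, br x y = br y x)
    (A : Set B) (hA : IsQPositive br A) :
    A ⊆ PqSet br (intrinsicConj br (PhiF br A)) ∧
    PqSet br (intrinsicConj br (PhiF br A)) ⊆ GSet br (PhiF br A) ∧
    GSet br (PhiF br A) ⊆
      qPi br A ∩ @closure B (weakTop br) (convexHull ℝ A) := by
  refine ⟨fun a ha => intrinsicConj_phiF_eq_qQ_of_mem hsym hA ha,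
    fun b hb => mem_GSet_of_mem_PqSet_intrinsicConj hsym hA hb,
    fun b hb => ⟨?_, mem_closure_convexHull_of_mem_GSet hsym hA hb⟩⟩
  obtain ⟨r, hr, -, hrq⟩ := exists_coe_of_mem_GSet hsym hA hb
  exact mem_qPi_of_phiF_le hsym (hr ▸ EReal.coe_le_coe_iff.mpr hrq)

/-- A ⊆ P_q(Φ_A^@) ⊆ G_{Φ_A} ⊆ A^π ∩ cl_w(conv A). -/
theorem stmt7 [Nontrivial B] (br : B →ₗ[ℝ] B →ₗ[ℝ] ℝ)
    (hsym : ∀ x y : B, br x y = br y x)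
    (A : Set B) (hA : IsQPositive br A) :
    A ⊆ PqSet br (intrinsicConj br (PhiF br A)) ∧
    PqSet br (intrinsicConj br (PhiF br A)) ⊆ GSet br (PhiF br A) ∧
    GSet br (PhiF br A) ⊆
      qPi br A ∩ @closure B (weakTop br) (convexHull ℝ A) :=
  stmt7_general br hsym A hA
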